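/- arXiv:2211.04885 — 3 statements merged into one kernel-verified Lean document; each statement's English description precedes it below -/
import Mathlib

section
/- Let M > 1 and τ ≥ 1. There exists a constant C = C(M, τ) > 0 such that for all c with 1 < c < M and all real numbers a, b, one has (|a| + |b|)^τ ≤ c|a|^τ + C/(c-1)^{τ-1} |b|^τ. -/
open Set Real

/-- Two-point convexity splitting for rpow. -/
lemma rpow_split (τ : ℝ) (hτ : 1 ≤ τ) {x y ε : ℝ} (hx : 0 ≤ x) (hy : 0 ≤ y)
    (hε : 0 < ε) :
    (x + y) ^ τ ≤ (1 + ε) ^ (τ - 1) * x ^ τ + ((1 + ε) / ε) ^ (τ - 1) * y ^ τ := by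
  have h1ε : (0:ℝ) < 1 + ε := by linarith
  have hw1 : (0:ℝ) ≤ 1 / (1 + ε) := by positivity
  have hw2 : (0:ℝ) ≤ ε / (1 + ε) := by positivity
  have hsum : 1 / (1 + ε) + ε / (1 + ε) = 1 := by field_simp
  have hz1 : ((1 + ε) * x) ∈ Ici (0:ℝ) := Set.mem_Ici.mpr (by positivity)
  have hz2 : (((1 + ε) / ε) * y) ∈ Ici (0:ℝ) := Set.mem_Ici.mpr (by positivity)
  have hc := (convexOn_rpow hτ).2 hz1 hz2 hw1 hw2 hsum
  simp only [smul_eq_mul] at hc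
  have heq : 1 / (1 + ε) * ((1 + ε) * x) + ε / (1 + ε) * ((1 + ε) / ε * y) = x + y := by
    field_simp
  rw [heq] at hc
  refine hc.trans (le_of_eq ?_)
  rw [mul_rpow (by positivity) hx, mul_rpow (by positivity) hy]
  rw [show τ = (τ - 1) + 1 by ring, rpow_add h1ε, rpow_add (by positivity : (0:ℝ) < (1+ε)/ε)]
  rw [rpow_one, rpow_one]
  field_simp
  ring

theorem holder_splitting (M τ : ℝ) (hM : 1 < M) (hτ : 1 ≤ τ) :
    ∃ C > (0 : ℝ), ∀ c : ℝ, 1 < c → c < M → ∀ a b : ℝ,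
      (|a| + |b|) ^ τ ≤ c * |a| ^ τ + C / (c - 1) ^ (τ - 1) * |b| ^ τ := by
  have h2τ : (2:ℝ) ≤ 2 ^ τ := by
    calc (2:ℝ) = 2 ^ (1:ℝ) := (rpow_one 2).symm
    _ ≤ 2 ^ τ := rpow_le_rpow_of_exponent_le one_le_two hτ
  set K : ℝ := 2 ^ τ - 1 + (M - 1) with hKdef
  have hK0 : 0 < K := by nlinarith
  have hKge : 2 ^ τ - 1 ≤ K := by nlinarith
  refine ⟨M * K ^ (τ - 1), by positivity, ?_⟩
  intro c hc1 hcM a b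
  set ε : ℝ := (c - 1) / K with hεdef
  have hε : 0 < ε := div_pos (by linarith) hK0
  have hε1 : ε ≤ 1 := by
    rw [hεdef, div_le_one hK0]; nlinarith
  have h1ε : (0:ℝ) < 1 + ε := by linarith
  -- key bound : (1+ε)^τ ≤ c
  have hconv := (convexOn_rpow hτ).2 (by norm_num : (1:ℝ) ∈ Ici (0:ℝ))
    (by norm_num : (2:ℝ) ∈ Ici (0:ℝ)) (by linarith : (0:ℝ) ≤ 1 - ε) hε.le (by ring)
  simp only [smul_eq_mul, one_rpow, mul_one] at hconv
  have heq : 1 - ε + ε * 2 = 1 + ε := by ring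
  rw [heq] at hconv
  have hεK : ε * (2 ^ τ - 1) ≤ c - 1 := by
    rw [hεdef]
    rw [div_mul_eq_mul_div, div_le_iff₀ hK0]
    have : 0 ≤ c - 1 := by linarith
    nlinarith
  have hkey : (1 + ε) ^ τ ≤ c := by nlinarith
  have hkey' : (1 + ε) ^ (τ - 1) ≤ c := by
    refine le_trans ?_ hkey
    exact rpow_le_rpow_of_exponent_le (by linarith) (by linarith)
  -- bound on second coefficient
  have hc1' : (0:ℝ) < c - 1 := by linarith
  have hcoef : ((1 + ε) / ε) ^ (τ - 1) ≤ M * K ^ (τ - 1) / (c - 1) ^ (τ - 1) := by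
    have hεr : ε ^ (τ - 1) = (c - 1) ^ (τ - 1) / K ^ (τ - 1) := by
      rw [hεdef, div_rpow hc1'.le hK0.le]
    rw [div_rpow h1ε.le hε.le, hεr, div_div_eq_mul_div]
    gcongr
    exact hkey'.trans hcM.le
  have hsplit := rpow_split τ hτ (abs_nonneg a) (abs_nonneg b) hε
  have h1 : (1 + ε) ^ (τ - 1) * |a| ^ τ ≤ c * |a| ^ τ :=
    mul_le_mul_of_nonneg_right hkey' (by positivity)
  have h2 : ((1 + ε) / ε) ^ (τ - 1) * |b| ^ τ ≤ M * K ^ (τ - 1) / (c - 1) ^ (τ - 1) * |b| ^ τ :=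
    mul_le_mul_of_nonneg_right hcoef (by positivity)
  linarith
end

section
/- Let d ≥ 2, s ∈ (0,1), p ≥ 1. There exists C > 0 depending only on d, s, p such that for all r₁, r₂ > 0 with r₂/Λ ≤ r₁ ≤ Λr₂ (Λ > 1 fixed), ∫_{S^{d-1}} ∫_{S^{d-1}} dσ₁ dσ₂ / |r₁σ₁ − r₂σ₂|^{d+sp} ≥ C / (r₂^{d-1} |r₁ − r₂|^{1+sp}). -/
/-!
Fix `σ₁`. Every `σ₂` in the spherical cap of radius `t = |r₁ - r₂| / (Λ r₂)` around `σ₁` satisfies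
`|r₁ σ₁ - r₂ σ₂| ≤ |r₁ - r₂| + r₂ |σ₁ - σ₂| ≤ 2 |r₁ - r₂|`, and the cap has `(d - 1)`-dimensional
Hausdorff measure `≳ t ^ (d - 1)`: the orthogonal projection onto `σ₁ᗮ` is `1`-Lipschitz and maps
the cap onto a ball of radius `t / 2`. So the inner integral is
`≳ t ^ (d - 1) / |r₁ - r₂| ^ (d + sp)` uniformly in `σ₁`, and integrating over `σ₁` gives the bound.
-/

open MeasureTheory ENNReal Set Metric Module

section Cap

variable {E : Type*} [NormedAddCommGroup E] [InnerProductSpace ℝ E]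

theorem closedBall_subset_orthogonalProjectionOnto_image_sphere_inter_closedBall
    {σ : E} (hσ : ‖σ‖ = 1) {t : ℝ} (ht : t ≤ 2) :
    closedBall (0 : (ℝ ∙ σ)ᗮ) (t / 2) ⊆
      (ℝ ∙ σ)ᗮ.orthogonalProjectionOnto '' (sphere 0 1 ∩ closedBall σ t) := by
  intro y hy
  rw [mem_closedBall_zero_iff] at hy
  have hy1 : ‖y‖ ^ 2 ≤ 1 := by nlinarith [norm_nonneg y]
  have pythagoras : ∀ b : ℝ, ‖(y : E) + b • σ‖ ^ 2 = ‖y‖ ^ 2 + b ^ 2 := fun b => by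
    have hyσ : inner ℝ (y : E) σ = 0 :=
      Submodule.mem_orthogonal_singleton_iff_inner_left.mp y.2
    rw [norm_add_sq_real, real_inner_smul_right, hyσ, Submodule.norm_coe, norm_smul, hσ,
      mul_one, Real.norm_eq_abs, sq_abs]
    ring
  set a := √(1 - ‖y‖ ^ 2)
  have ha : a ^ 2 = 1 - ‖y‖ ^ 2 := Real.sq_sqrt (by linarith)
  have ha0 : 0 ≤ a := Real.sqrt_nonneg _
  refine ⟨(y : E) + a • σ, ⟨?_, ?_⟩, ?_⟩
  · rw [mem_sphere_zero_iff_norm, ← pow_left_inj₀ (norm_nonneg _) zero_le_one two_ne_zero,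
      pythagoras, ha]
    ring
  · -- `(1 - a)² ≤ (1 - a)(1 + a) = ‖y‖²`
    have hdist : ‖(y : E) + (a - 1) • σ‖ ^ 2 ≤ t ^ 2 := by
      rw [pythagoras]; nlinarith [norm_nonneg y]
    rw [mem_closedBall, dist_eq_norm, show (y : E) + a • σ - σ = (y : E) + (a - 1) • σ by
      rw [sub_smul, one_smul]; abel]
    exact abs_le_of_sq_le_sq' hdist (by linarith [norm_nonneg y]) |>.2
  · rw [map_add, map_smul, Submodule.orthogonalProjectionOnto_mem_subspace_eq_self,
      Submodule.orthogonalProjectionOnto_orthogonalComplement_singleton_eq_zero, smul_zero,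
      add_zero]

theorem exists_pos_mul_rpow_le_hausdorffMeasure_sphere_inter_closedBall
    [MeasurableSpace E] [BorelSpace E] {m : ℕ} (hE : finrank ℝ E = m + 1) :
    ∃ κ : ℝ, 0 < κ ∧ ∀ σ : E, ‖σ‖ = 1 → ∀ t : ℝ, 0 ≤ t → t ≤ 2 →
      ENNReal.ofReal (κ * t ^ (m : ℝ)) ≤ μH[m] (sphere 0 1 ∩ closedBall σ t) := by
  have : Fact (finrank ℝ E = m + 1) := ⟨hE⟩
  have : FiniteDimensional ℝ E := .of_fact_finrank_eq_succ m
  set F := EuclideanSpace ℝ (Fin m)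
  have hball : μH[m] (ball (0 : F) 1) ≠ ⊤ := measure_ball_lt_top.ne
  refine ⟨(μH[m] (ball (0 : F) 1)).toReal / 2 ^ (m : ℝ),
    div_pos (ENNReal.toReal_pos (measure_ball_pos _ _ one_pos).ne' hball) (by positivity), ?_⟩
  intro σ hσ t ht0 ht2
  set K := (ℝ ∙ σ)ᗮ
  have hK : finrank ℝ K = m :=
    Submodule.finrank_orthogonal_span_singleton (norm_ne_zero_iff.mp (by simp [hσ]))
  let e : K ≃ₗᵢ[ℝ] F := ((stdOrthonormalBasis ℝ K).reindex (finCongr hK)).repr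
  have hπ : LipschitzWith 1 (e ∘ K.orthogonalProjectionOnto) := by
    simpa using e.lipschitz.comp K.lipschitzWith_orthogonalProjectionOnto
  calc ENNReal.ofReal ((μH[m] (ball (0 : F) 1)).toReal / 2 ^ (m : ℝ) * t ^ (m : ℝ))
      = μH[m] (closedBall (0 : F) (t / 2)) := by
        rw [Measure.addHaar_closedBall _ _ (by positivity)]
        conv_rhs => rw [← ENNReal.ofReal_toReal hball]
        rw [finrank_euclideanSpace_fin, ← Real.rpow_natCast, Real.div_rpow ht0 zero_le_two,
          ← ENNReal.ofReal_mul (by positivity)]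
        ring_nf
    _ ≤ μH[m] ((e ∘ K.orthogonalProjectionOnto) '' (sphere 0 1 ∩ closedBall σ t)) := by
        refine measure_mono ?_
        have he := e.image_closedBall 0 (t / 2)
        rw [map_zero] at he
        rw [image_comp, ← he]
        exact image_mono
          (closedBall_subset_orthogonalProjectionOnto_image_sphere_inter_closedBall hσ ht2)
    _ ≤ μH[m] (sphere 0 1 ∩ closedBall σ t) := by
        simpa using hπ.hausdorffMeasure_image_le (Nat.cast_nonneg m) _

end Cap

section Integral

variable {V : Type*} [NormedAddCommGroup V] [NormedSpace ℝ V]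

theorem abs_sub_le_norm_smul_sub_smul {σ₁ σ₂ : V} (h₁ : ‖σ₁‖ = 1) (h₂ : ‖σ₂‖ = 1)
    {r₁ r₂ : ℝ} (hr₁ : 0 ≤ r₁) (hr₂ : 0 ≤ r₂) : |r₁ - r₂| ≤ ‖r₁ • σ₁ - r₂ • σ₂‖ := by
  simpa [norm_smul, h₁, h₂, abs_of_nonneg hr₁, abs_of_nonneg hr₂] using
    abs_norm_sub_norm_le (r₁ • σ₁) (r₂ • σ₂)

theorem norm_smul_sub_smul_le {σ₁ : V} (h₁ : ‖σ₁‖ = 1) (σ₂ : V) (r₁ : ℝ) {r₂ : ℝ}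
    (hr₂ : 0 ≤ r₂) : ‖r₁ • σ₁ - r₂ • σ₂‖ ≤ |r₁ - r₂| + r₂ * ‖σ₁ - σ₂‖ :=
  calc ‖r₁ • σ₁ - r₂ • σ₂‖ = ‖(r₁ - r₂) • σ₁ + r₂ • (σ₁ - σ₂)‖ := by congr 1; module
    _ ≤ |r₁ - r₂| + r₂ * ‖σ₁ - σ₂‖ := by
      refine (norm_add_le _ _).trans_eq ?_
      rw [norm_smul, norm_smul, h₁, mul_one, Real.norm_eq_abs, Real.norm_eq_abs,
        abs_of_nonneg hr₂]

theorem mul_measure_le_setLIntegral {α : Type*} [MeasurableSpace α] {μ : Measure α}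
    {s t : Set α} (ht : MeasurableSet t) (hts : t ⊆ s) {c : ℝ≥0∞} {f : α → ℝ≥0∞}
    (hf : ∀ x ∈ t, c ≤ f x) : c * μ t ≤ ∫⁻ x in s, f x ∂μ :=
  calc c * μ t = ∫⁻ _ in t, c ∂μ := (setLIntegral_const t c).symm
    _ ≤ ∫⁻ x in t, f x ∂μ := setLIntegral_mono' ht hf
    _ ≤ ∫⁻ x in s, f x ∂μ := lintegral_mono_set hts

theorem ofReal_le_setLIntegral_sphere_one_div_norm_smul_sub_smul_rpow
    [MeasurableSpace V] [OpensMeasurableSpace V] {μ : Measure V} {κ A q Λ r₁ r₂ : ℝ} {σ₁ : V}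
    (hσ₁ : ‖σ₁‖ = 1)
    (hcap : ∀ t, 0 ≤ t → t ≤ 1 → ENNReal.ofReal (κ * t ^ A) ≤ μ (sphere 0 1 ∩ closedBall σ₁ t))
    (hq : 0 ≤ q) (hΛ : 1 ≤ Λ) (hr₁ : 0 ≤ r₁) (hr₂ : 0 < r₂) (hr₁₂ : r₁ ≤ Λ * r₂)
    (hne : r₁ ≠ r₂) :
    ENNReal.ofReal (κ / (2 ^ q * Λ ^ A) / (r₂ ^ A * |r₁ - r₂| ^ (q - A))) ≤
      ∫⁻ σ₂ in sphere 0 1, ENNReal.ofReal (1 / ‖r₁ • σ₁ - r₂ • σ₂‖ ^ q) ∂μ := by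
  set δ := |r₁ - r₂|
  have hδ : 0 < δ := abs_pos.mpr (sub_ne_zero.mpr hne)
  have hΛ₀ : 0 < Λ := zero_lt_one.trans_le hΛ
  set t := δ / (Λ * r₂) with ht
  have ht1 : t ≤ 1 := by
    rw [div_le_one (by positivity), abs_le]
    constructor <;> nlinarith
  have hpt : ∀ σ₂ ∈ sphere 0 1 ∩ closedBall σ₁ t,
      ENNReal.ofReal (1 / (2 * δ) ^ q) ≤ ENNReal.ofReal (1 / ‖r₁ • σ₁ - r₂ • σ₂‖ ^ q) := by
    rintro σ₂ ⟨hσ₂, hσ₁₂⟩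
    rw [mem_sphere_zero_iff_norm] at hσ₂
    rw [mem_closedBall, dist_eq_norm] at hσ₁₂
    have hlower := abs_sub_le_norm_smul_sub_smul hσ₁ hσ₂ hr₁ hr₂.le
    have hupper : ‖r₁ • σ₁ - r₂ • σ₂‖ ≤ 2 * δ :=
      calc ‖r₁ • σ₁ - r₂ • σ₂‖ ≤ δ + r₂ * ‖σ₁ - σ₂‖ := norm_smul_sub_smul_le hσ₁ σ₂ r₁ hr₂.le
        _ ≤ δ + r₂ * t := by rw [norm_sub_rev]; gcongr
        _ = δ + δ / Λ := by rw [ht]; field_simp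
        _ ≤ 2 * δ := by rw [two_mul, add_le_add_iff_left]; exact div_le_self hδ.le hΛ
    gcongr
    exact Real.rpow_pos_of_pos (hδ.trans_le hlower) q
  calc ENNReal.ofReal (κ / (2 ^ q * Λ ^ A) / (r₂ ^ A * δ ^ (q - A)))
      = ENNReal.ofReal (1 / (2 * δ) ^ q) * ENNReal.ofReal (κ * t ^ A) := by
        rw [← ENNReal.ofReal_mul (by positivity), Real.mul_rpow zero_le_two hδ.le,
          Real.div_rpow hδ.le (by positivity), Real.mul_rpow hΛ₀.le hr₂.le, Real.rpow_sub hδ]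
        field_simp
    _ ≤ ENNReal.ofReal (1 / (2 * δ) ^ q) * μ (sphere 0 1 ∩ closedBall σ₁ t) := by
        gcongr
        exact hcap t (by positivity) ht1
    _ ≤ _ := mul_measure_le_setLIntegral
        (isClosed_sphere.inter isClosed_closedBall).measurableSet inter_subset_left hpt

end Integral

theorem sphere_double_integral_lower_bound_general
    (d : ℕ) (s p : ℝ) (hd : 2 ≤ d) (hs : 0 < s) (hp : 1 ≤ p)
    (Λ : ℝ) (hΛ : 1 < Λ) :
    ∃ C > (0 : ℝ), ∀ r₁ r₂ : ℝ, 0 < r₁ → 0 < r₂ →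
      r₂ / Λ ≤ r₁ → r₁ ≤ Λ * r₂ →
      ENNReal.ofReal (C / (r₂ ^ ((d : ℝ) - 1) * |r₁ - r₂| ^ (1 + s * p))) ≤
        ∫⁻ σ₁ in Metric.sphere (0 : EuclideanSpace ℝ (Fin d)) 1,
          ∫⁻ σ₂ in Metric.sphere (0 : EuclideanSpace ℝ (Fin d)) 1,
            ENNReal.ofReal (1 / ‖r₁ • σ₁ - r₂ • σ₂‖ ^ ((d : ℝ) + s * p))
          ∂(μH[(d : ℝ) - 1]) ∂(μH[(d : ℝ) - 1]) := by
  obtain ⟨κ, hκ, hcap⟩ := exists_pos_mul_rpow_le_hausdorffMeasure_sphere_inter_closedBall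
    (E := EuclideanSpace ℝ (Fin d)) (m := d - 1) (by simp; omega)
  rw [Nat.cast_sub (by omega), Nat.cast_one] at hcap
  have hsp : 0 < s * p := mul_pos hs (by linarith)
  refine ⟨κ ^ 2 / (2 ^ ((d : ℝ) + s * p) * Λ ^ ((d : ℝ) - 1)), by positivity, ?_⟩
  intro r₁ r₂ hr₁ hr₂ _ hr₁₂
  -- for `r₁ = r₂` the left side is `ENNReal.ofReal (C / 0) = 0`
  rcases eq_or_ne r₁ r₂ with rfl | hne
  · simp [Real.zero_rpow (by positivity : 1 + s * p ≠ 0)]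
  have hsphere :
      ENNReal.ofReal κ ≤ μH[(d : ℝ) - 1] (sphere (0 : EuclideanSpace ℝ (Fin d)) 1) := by
    have hσ₀ : ‖EuclideanSpace.single (⟨0, by omega⟩ : Fin d) (1 : ℝ)‖ = 1 := by simp
    simpa using (hcap _ hσ₀ 1 zero_le_one one_le_two).trans (measure_mono inter_subset_left)
  calc ENNReal.ofReal (κ ^ 2 / (2 ^ ((d : ℝ) + s * p) * Λ ^ ((d : ℝ) - 1)) /
        (r₂ ^ ((d : ℝ) - 1) * |r₁ - r₂| ^ (1 + s * p)))
      = ENNReal.ofReal (κ / (2 ^ ((d : ℝ) + s * p) * Λ ^ ((d : ℝ) - 1)) /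
          (r₂ ^ ((d : ℝ) - 1) * |r₁ - r₂| ^ ((d : ℝ) + s * p - ((d : ℝ) - 1)))) *
          ENNReal.ofReal κ := by
        rw [← ENNReal.ofReal_mul (by positivity),
          show (d : ℝ) + s * p - ((d : ℝ) - 1) = 1 + s * p by ring]
        ring_nf
    _ ≤ _ := (mul_le_mul_right hsphere _).trans <| mul_measure_le_setLIntegral
        isClosed_sphere.measurableSet subset_rfl fun σ₁ hσ₁ =>
          ofReal_le_setLIntegral_sphere_one_div_norm_smul_sub_smul_rpow
            (mem_sphere_zero_iff_norm.mp hσ₁)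
            (fun t ht0 ht1 => hcap σ₁ (mem_sphere_zero_iff_norm.mp hσ₁) t ht0
              (ht1.trans one_le_two))
            (by positivity) hΛ.le hr₁.le hr₂ hr₁₂ hne

theorem sphere_double_integral_lower_bound
    (d : ℕ) (s p : ℝ) (hd : 2 ≤ d) (hs : 0 < s) (hs1 : s < 1) (hp : 1 ≤ p)
    (Λ : ℝ) (hΛ : 1 < Λ) :
    ∃ C > (0 : ℝ), ∀ r₁ r₂ : ℝ, 0 < r₁ → 0 < r₂ →
      r₂ / Λ ≤ r₁ → r₁ ≤ Λ * r₂ →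
      ENNReal.ofReal (C / (r₂ ^ ((d : ℝ) - 1) * |r₁ - r₂| ^ (1 + s * p))) ≤
        ∫⁻ σ₁ in Metric.sphere (0 : EuclideanSpace ℝ (Fin d)) 1,
          ∫⁻ σ₂ in Metric.sphere (0 : EuclideanSpace ℝ (Fin d)) 1,
            ENNReal.ofReal (1 / ‖r₁ • σ₁ - r₂ • σ₂‖ ^ ((d : ℝ) + s * p))
          ∂(μH[(d : ℝ) - 1]) ∂(μH[(d : ℝ) - 1]) :=
  sphere_double_integral_lower_bound_general d s p hd hs hp Λ hΛ
end

section
/- Under the reparametrization for radial functions (d ≥ 2): set τ' = τ, p' = p, q' = q, a' = a, s' = s, α' = α + (d−1)/p, β' = β + (d−1)/q, γ' = γ + (d−1)/τ, and define σ by γ = aσ + (1−a)β and σ' by γ' = a'σ' + (1−a')β'. If the balance law 1/τ + γ/d = a(1/p + (α−s)/d) + (1−a)(1/q + β/d) holds, then α' − σ' = (α − σ)/d + s(d−1)/d. In particular α' − σ' ≥ 0 if and only if α − σ ≥ −s(d−1). -/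
/-!
Eliminating `β` between the balance law and the definition of `σ` gives
`1/τ - (1-a)/q = a (1/p + (α - σ - s)/d)`; subtracting the definitions of `σ` and `σ'` gives
`(d-1)(1/τ - (1-a)/q) = a (σ' - σ)`. Together they express `σ' - σ`, and hence `α' - σ'`,
through `α - σ`.
-/

section Reparametrization

variable {K : Type*} [Field K] {d s p q τ a α β γ σ σ' : K}

theorem balance_law_eliminate_beta (hd : d ≠ 0) (hσ : γ = a * σ + (1 - a) * β)
    (hbal : 1 / τ + γ / d = a * (1 / p + (α - s) / d) + (1 - a) * (1 / q + β / d)) :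
    1 / τ - (1 - a) / q = a * (1 / p + (α - σ - s) / d) := by
  linear_combination (norm := (field_simp; ring)) hbal - hσ / d

theorem sigma'_sub_sigma_eq (hd : d ≠ 0) (ha : a ≠ 0) (hσ : γ = a * σ + (1 - a) * β)
    (hσ' : γ + (d - 1) / τ = a * σ' + (1 - a) * (β + (d - 1) / q))
    (hbal : 1 / τ + γ / d = a * (1 / p + (α - s) / d) + (1 - a) * (1 / q + β / d)) :
    σ' - σ = (d - 1) * (1 / p + (α - σ - s) / d) := by
  have hred := balance_law_eliminate_beta hd hσ hbal
  linear_combination (norm := (field_simp; ring)) ((d - 1) * hred + hσ - hσ') / a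

theorem reparametrized_alpha_sub_sigma_eq (hd : d ≠ 0) (ha : a ≠ 0) (hσ : γ = a * σ + (1 - a) * β)
    (hσ' : γ + (d - 1) / τ = a * σ' + (1 - a) * (β + (d - 1) / q))
    (hbal : 1 / τ + γ / d = a * (1 / p + (α - s) / d) + (1 - a) * (1 / q + β / d)) :
    (α + (d - 1) / p) - σ' = (α - σ) / d + s * (d - 1) / d := by
  linear_combination (norm := (field_simp; ring)) -sigma'_sub_sigma_eq hd ha hσ hσ' hbal

end Reparametrization

theorem radial_reparametrization_general (d : ℕ) (s p q τ a α β γ σ σ' : ℝ)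
    (hd : 2 ≤ d) (ha : 0 < a)
    (hσ : γ = a * σ + (1 - a) * β)
    (hσ' : γ + (d - 1) / τ = a * σ' + (1 - a) * (β + (d - 1) / q))
    (hbal : 1 / τ + γ / d = a * (1 / p + (α - s) / d) + (1 - a) * (1 / q + β / d)) :
    (α + (d - 1) / p) - σ' = (α - σ) / d + s * (d - 1) / d ∧
      (0 ≤ (α + (d - 1) / p) - σ' ↔ -(s * (d - 1)) ≤ α - σ) := by
  have hd0 : (0 : ℝ) < d := by positivity
  have key := reparametrized_alpha_sub_sigma_eq hd0.ne' ha.ne' hσ hσ' hbal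
  refine ⟨key, ?_⟩
  rw [key, ← add_div, le_div_iff₀ hd0, zero_mul, neg_le_iff_add_nonneg]

theorem radial_reparametrization (d : ℕ) (s p q τ a α β γ σ σ' : ℝ)
    (hd : 2 ≤ d) (hs : 0 < s) (hs1 : s ≤ 1)
    (hp : 1 ≤ p) (hq : 1 ≤ q) (hτ : 1 ≤ τ) (ha : 0 < a) (ha1 : a ≤ 1)
    (hσ : γ = a * σ + (1 - a) * β)
    (hσ' : γ + (d - 1) / τ = a * σ' + (1 - a) * (β + (d - 1) / q))
    (hbal : 1 / τ + γ / d = a * (1 / p + (α - s) / d) + (1 - a) * (1 / q + β / d)) :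
    (α + (d - 1) / p) - σ' = (α - σ) / d + s * (d - 1) / d ∧
      (0 ≤ (α + (d - 1) / p) - σ' ↔ -(s * (d - 1)) ≤ α - σ) :=
  radial_reparametrization_general d s p q τ a α β γ σ σ' hd ha hσ hσ' hbal
end
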